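/- Graded natural transformations satisfy a braided interchange law: given V-functors F, G, H : C → D and I, J, K : D → E, with κ : F ⇒ G (u-graded), μ : G ⇒ H (w-graded), λ : I ⇒ J (v-graded), ν : J ⇒ K (x-graded), one has ((κλ)∘(μν))_a = (1_u ⊗ β_{v,w} ⊗ 1_x) ∘ ((κ∘μ)(λ∘ν))_a as morphisms u⊗v⊗w⊗x → E(I(F(a)) → K(H(a))). -/

import Mathlib

open CategoryTheory MonoidalCategory

variable {V : Type*} [Category V] [MonoidalCategory V] [BraidedCategory V]
variable {C D E : Type*} [EnrichedCategory V C] [EnrichedCategory V D]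
  [EnrichedCategory V E]

/-- A `v`-graded natural transformation between `V`-functors `F, G`
is a family `λ_a : v ⟶ D(F a → G a)` satisfying the braided naturality square. -/
def IsGradedNatTrans {C D : Type*} [EnrichedCategory V C] [EnrichedCategory V D]
    (v : V) (F G : EnrichedFunctor V C D)
    (lam : ∀ a : C, v ⟶ (F.obj a ⟶[V] G.obj a)) : Prop :=
  ∀ a b : C,
    (lam a ⊗ₘ G.map a b) ≫ eComp V (F.obj a) (G.obj a) (G.obj b) =
      (β_ v (a ⟶[V] b)).hom ≫ (F.map a b ⊗ₘ lam b) ≫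
        eComp V (F.obj a) (F.obj b) (G.obj b)

/-- Vertical composition of graded families. -/
def vcomp {C D : Type*} [EnrichedCategory V C] [EnrichedCategory V D]
    {u v : V} {F G H : EnrichedFunctor V C D}
    (lam : ∀ a : C, u ⟶ (F.obj a ⟶[V] G.obj a))
    (mu : ∀ a : C, v ⟶ (G.obj a ⟶[V] H.obj a)) :
    ∀ a : C, u ⊗ v ⟶ (F.obj a ⟶[V] H.obj a) :=
  fun a => (lam a ⊗ₘ mu a) ≫ eComp V (F.obj a) (G.obj a) (H.obj a)

/-- Horizontal composition of graded families. -/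
def hcomp {C D E : Type*} [EnrichedCategory V C] [EnrichedCategory V D]
    [EnrichedCategory V E]
    {u v : V} {F G : EnrichedFunctor V C D} {H I : EnrichedFunctor V D E}
    (kap : ∀ a : C, u ⟶ (F.obj a ⟶[V] G.obj a))
    (lam : ∀ d : D, v ⟶ (H.obj d ⟶[V] I.obj d)) :
    ∀ a : C, u ⊗ v ⟶ (H.obj (F.obj a) ⟶[V] I.obj (G.obj a)) :=
  fun a =>
    (kap a ⊗ₘ lam (G.obj a)) ≫
      (H.map (F.obj a) (G.obj a) ▷ (H.obj (G.obj a) ⟶[V] I.obj (G.obj a))) ≫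
      eComp V (H.obj (F.obj a)) (H.obj (G.obj a)) (I.obj (G.obj a))

lemma comp_tensor_left {A B C' X Y : V} (f : A ⟶ B) (g : B ⟶ C') (h : X ⟶ Y) :
    (f ≫ g) ⊗ₘ h = (f ▷ X) ≫ (g ⊗ₘ h) := by
  rw [← tensorHom_id, tensorHom_comp_tensorHom, Category.id_comp]

lemma tensor_comp_right {A B X Y Z : V} (f : A ⟶ B) (g : X ⟶ Y) (h : Y ⟶ Z) :
    f ⊗ₘ (g ≫ h) = (A ◁ g) ≫ (f ⊗ₘ h) := by
  rw [← id_tensorHom, tensorHom_comp_tensorHom, Category.id_comp]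

/-- Associativity of two-step graded composites. -/
lemma comp2_assoc {E' : Type*} [EnrichedCategory V E'] {p q r : V} {a b c d : E'}
    (f : p ⟶ (a ⟶[V] b)) (g : q ⟶ (b ⟶[V] c)) (h : r ⟶ (c ⟶[V] d)) :
    (((f ⊗ₘ g) ≫ eComp V a b c) ⊗ₘ h) ≫ eComp V a c d =
      (α_ p q r).hom ≫ (f ⊗ₘ ((g ⊗ₘ h) ≫ eComp V b c d)) ≫ eComp V a b d := by
  calc (((f ⊗ₘ g) ≫ eComp V a b c) ⊗ₘ h) ≫ eComp V a c d
      = ((f ⊗ₘ g) ⊗ₘ h) ≫ (eComp V a b c ▷ (c ⟶[V] d) ≫ eComp V a c d) := by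
        rw [← tensorHom_id, tensorHom_comp_tensorHom_assoc, Category.comp_id]
    _ = ((f ⊗ₘ g) ⊗ₘ h) ≫ (α_ _ _ _).hom ≫ (_ ◁ eComp V b c d) ≫ eComp V a b d := by
        rw [← e_assoc' V a b c d]
    _ = (α_ p q r).hom ≫ (f ⊗ₘ (g ⊗ₘ h)) ≫ (_ ◁ eComp V b c d) ≫ eComp V a b d := by
        rw [associator_naturality_assoc]
    _ = (α_ p q r).hom ≫ (f ⊗ₘ ((g ⊗ₘ h) ≫ eComp V b c d)) ≫ eComp V a b d := by
        rw [← id_tensorHom, tensorHom_comp_tensorHom_assoc, Category.comp_id]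

lemma comp2_assoc' {E' : Type*} [EnrichedCategory V E'] {p q r : V} {a b c d : E'}
    (f : p ⟶ (a ⟶[V] b)) (g : q ⟶ (b ⟶[V] c)) (h : r ⟶ (c ⟶[V] d)) :
    (f ⊗ₘ ((g ⊗ₘ h) ≫ eComp V b c d)) ≫ eComp V a b d =
      (α_ p q r).inv ≫ (((f ⊗ₘ g) ≫ eComp V a b c) ⊗ₘ h) ≫ eComp V a c d := by
  rw [comp2_assoc, Iso.inv_hom_id_assoc]

lemma tensorμ_coherence (u v w x : V) :
    (α_ u v (w ⊗ x)).hom ≫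
      u ◁ ((α_ v w x).inv ≫ (β_ v w).hom ▷ x ≫ (α_ w v x).hom) =
    tensorμ u v w x ≫ (α_ u w (v ⊗ x)).hom := by
  simp [tensorμ]

/-- Graded natural transformations satisfy the braided interchange law:
`((κλ)∘(μν))_a = (1_u ⊗ β_{v,w} ⊗ 1_x) ≫ ((κ∘μ)(λ∘ν))_a`. -/
theorem gradedNatTrans_braided_interchange
    (u v w x : V) (F G H : EnrichedFunctor V C D) (I J K : EnrichedFunctor V D E)
    (kap : ∀ a : C, u ⟶ (F.obj a ⟶[V] G.obj a))
    (mu : ∀ a : C, w ⟶ (G.obj a ⟶[V] H.obj a))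
    (lam : ∀ d : D, v ⟶ (I.obj d ⟶[V] J.obj d))
    (nu : ∀ d : D, x ⟶ (J.obj d ⟶[V] K.obj d))
    (hk : IsGradedNatTrans u F G kap) (hm : IsGradedNatTrans w G H mu)
    (hl : IsGradedNatTrans v I J lam) (hn : IsGradedNatTrans x J K nu) :
    ∀ a : C,
      vcomp (F := F.comp V I) (G := G.comp V J) (H := H.comp V K)
        (hcomp kap lam) (hcomp mu nu) a =
      tensorμ u v w x ≫ hcomp (vcomp kap mu) (vcomp lam nu) a := by
  intro a
  -- component abbreviations
  have h1 : hcomp kap lam a =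
      ((kap a ≫ I.map (F.obj a) (G.obj a)) ⊗ₘ lam (G.obj a)) ≫
        eComp V (I.obj (F.obj a)) (I.obj (G.obj a)) (J.obj (G.obj a)) := by
    simp only [hcomp]
    rw [← tensorHom_id, tensorHom_comp_tensorHom_assoc, Category.comp_id]
  have h2 : hcomp mu nu a =
      ((mu a ≫ J.map (G.obj a) (H.obj a)) ⊗ₘ nu (H.obj a)) ≫
        eComp V (J.obj (G.obj a)) (J.obj (H.obj a)) (K.obj (H.obj a)) := by
    simp only [hcomp]
    rw [← tensorHom_id, tensorHom_comp_tensorHom_assoc, Category.comp_id]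
  have h3 : hcomp (vcomp kap mu) (vcomp lam nu) a =
      ((((kap a ≫ I.map (F.obj a) (G.obj a)) ⊗ₘ (mu a ≫ I.map (G.obj a) (H.obj a))) ≫
          eComp V (I.obj (F.obj a)) (I.obj (G.obj a)) (I.obj (H.obj a))) ⊗ₘ
        ((lam (H.obj a) ⊗ₘ nu (H.obj a)) ≫
          eComp V (I.obj (H.obj a)) (J.obj (H.obj a)) (K.obj (H.obj a)))) ≫
        eComp V (I.obj (F.obj a)) (I.obj (H.obj a)) (K.obj (H.obj a)) := by
    simp only [hcomp, vcomp]
    rw [← tensorHom_id, tensorHom_comp_tensorHom_assoc, Category.comp_id, Category.assoc,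
      EnrichedFunctor.map_comp, ← Category.assoc ((kap a ⊗ₘ mu a)), tensorHom_comp_tensorHom]
  -- the middle braided exchange, from naturality of `lam`
  have hmid : (lam (G.obj a) ⊗ₘ (mu a ≫ J.map (G.obj a) (H.obj a))) ≫
        eComp V (I.obj (G.obj a)) (J.obj (G.obj a)) (J.obj (H.obj a)) =
      (β_ v w).hom ≫ ((mu a ≫ I.map (G.obj a) (H.obj a)) ⊗ₘ lam (H.obj a)) ≫
        eComp V (I.obj (G.obj a)) (I.obj (H.obj a)) (J.obj (H.obj a)) := by
    have key := hl (G.obj a) (H.obj a)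
    calc (lam (G.obj a) ⊗ₘ (mu a ≫ J.map (G.obj a) (H.obj a))) ≫
          eComp V (I.obj (G.obj a)) (J.obj (G.obj a)) (J.obj (H.obj a))
        = (v ◁ mu a) ≫ (lam (G.obj a) ⊗ₘ J.map (G.obj a) (H.obj a)) ≫
            eComp V (I.obj (G.obj a)) (J.obj (G.obj a)) (J.obj (H.obj a)) := by
          rw [← Category.id_comp (lam (G.obj a)), ← tensorHom_comp_tensorHom_assoc, id_tensorHom,
            Category.id_comp]
      _ = (v ◁ mu a) ≫ (β_ v ((G.obj a) ⟶[V] (H.obj a))).hom ≫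
            (I.map (G.obj a) (H.obj a) ⊗ₘ lam (H.obj a)) ≫
            eComp V (I.obj (G.obj a)) (I.obj (H.obj a)) (J.obj (H.obj a)) := by
          rw [key]
      _ = (β_ v w).hom ≫ (mu a ▷ v) ≫
            (I.map (G.obj a) (H.obj a) ⊗ₘ lam (H.obj a)) ≫
            eComp V (I.obj (G.obj a)) (I.obj (H.obj a)) (J.obj (H.obj a)) := by
          rw [BraidedCategory.braiding_naturality_right_assoc]
      _ = (β_ v w).hom ≫ ((mu a ≫ I.map (G.obj a) (H.obj a)) ⊗ₘ lam (H.obj a)) ≫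
            eComp V (I.obj (G.obj a)) (I.obj (H.obj a)) (J.obj (H.obj a)) := by
          rw [← tensorHom_id, tensorHom_comp_tensorHom_assoc, Category.id_comp]
  dsimp only [vcomp, EnrichedFunctor.comp_obj, EnrichedFunctor.comp]
  rw [h1, h2, h3]
  rw [comp2_assoc, comp2_assoc]
  rw [comp2_assoc' (lam (G.obj a))]
  rw [hmid]
  rw [comp_tensor_left ((β_ v w).hom), Category.assoc,
    comp2_assoc (mu a ≫ I.map (G.obj a) (H.obj a)) (lam (H.obj a)) (nu (H.obj a))]
  simp only [tensor_comp_right, comp_tensor_left, Category.assoc]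
  simp [tensorμ, MonoidalCategory.whiskerLeft_comp]
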